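/- The maximal number of nearest-neighbour bonds among subsets of $\mathbb{Z}^2$ with exactly $\ell^2$ elements ($\ell \ge 1$) equals $2\ell^2 - 2\ell$, and it is attained by the $\ell \times \ell$ square. -/

import Mathlib

/-!
Split the bonds into horizontal and vertical ones. In every row the rightmost cell has no
horizontal bond, so a set meeting `r` rows has at most `#C - r` horizontal bonds; likewise
at most `#C - c` vertical bonds if it meets `c` columns. Since the set fits in a `c × r`
box, `ℓ² ≤ c r`, and AM-GM gives `c + r ≥ 2ℓ`. The `ℓ × ℓ` square has `ℓ(ℓ - 1)` bonds
in each direction.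
-/

/-- Nearest-neighbour adjacency in `ℤ²`. -/
def Adj (x y : ℤ × ℤ) : Prop := |x.1 - y.1| + |x.2 - y.2| = 1

instance (x y : ℤ × ℤ) : Decidable (Adj x y) := by unfold Adj; infer_instance

/-- Number of nearest-neighbour bonds (unordered adjacent pairs) of a finite
subset of `ℤ²`. -/
def bonds (C : Finset (ℤ × ℤ)) : ℕ :=
  ((C ×ˢ C).filter (fun p => Adj p.1 p.2)).card / 2

open Finset

section General

variable {α : Type*} [DecidableEq α]

def bondsAlong [Add α] (C : Finset α) (e : α) : ℕ := #{x ∈ C | x + e ∈ C}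

lemma bondsAlong_add_card_image_le {β γ : Type*} [Add α] [DecidableEq β] [LinearOrder γ]
    (C : Finset α) (e : α) (π : α → β) (f : α → γ)
    (hπ : ∀ x, π (x + e) = π x) (hf : ∀ x, f x < f (x + e)) :
    bondsAlong C e + #(C.image π) ≤ #C := by
  -- An `f`-maximal point of each fibre of `π` in `C` leaves `C` when shifted by `e`.
  have hcover : C.image π ⊆ {x ∈ C | x + e ∉ C}.image π := by
    intro b hb
    obtain ⟨x, hxC, hxf⟩ :=
      exists_max_image {y ∈ C | π y = b} f (by simpa [Finset.Nonempty] using hb)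
    rw [mem_filter] at hxC
    refine mem_image.2 ⟨x, mem_filter.2 ⟨hxC.1, fun hxe => ?_⟩, hxC.2⟩
    exact (hf x).not_ge (hxf _ (mem_filter.2 ⟨hxe, (hπ x).trans hxC.2⟩))
  calc bondsAlong C e + #(C.image π)
      ≤ bondsAlong C e + #{x ∈ C | x + e ∉ C} := by
        gcongr; exact (card_le_card hcover).trans card_image_le
    _ = #C := card_filter_add_card_filter_not _

lemma card_filter_snd_eq_fst_add [Add α] (C : Finset α) (e : α) :
    #{p ∈ C ×ˢ C | p.2 = p.1 + e} = bondsAlong C e := by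
  rw [bondsAlong, ← card_image_of_injective _ (fun x y h => congrArg Prod.fst h :
    Function.Injective fun x => (x, x + e))]
  congr 1
  ext ⟨x, y⟩
  simp only [mem_filter, mem_product, mem_image, Prod.mk.injEq]
  constructor
  · rintro ⟨⟨hx, hy⟩, rfl⟩
    exact ⟨x, ⟨hx, hy⟩, rfl, rfl⟩
  · rintro ⟨x, ⟨hx, hy⟩, rfl, rfl⟩
    exact ⟨⟨hx, hy⟩, rfl⟩

lemma bondsAlong_neg [AddGroup α] (C : Finset α) (e : α) :
    bondsAlong C (-e) = bondsAlong C e := by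
  refine card_equiv (Equiv.addRight (-e)) fun x => ?_
  simp [and_comm]

end General

lemma adj_iff_sub_mem (x y : ℤ × ℤ) :
    Adj x y ↔ y - x ∈ ({(1, 0), -(1, 0), (0, 1), -(0, 1)} : Finset (ℤ × ℤ)) := by
  obtain ⟨a, b⟩ := x
  obtain ⟨c, d⟩ := y
  simp only [Adj, mem_insert, mem_singleton, Prod.mk_sub_mk, Prod.neg_mk, Prod.mk.injEq]
  rw [Int.abs_eq_natAbs, Int.abs_eq_natAbs]
  omega

lemma bonds_eq_bondsAlong_add_bondsAlong (C : Finset (ℤ × ℤ)) :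
    bonds C = bondsAlong C (1, 0) + bondsAlong C (0, 1) := by
  set D : Finset (ℤ × ℤ) := {(1, 0), -(1, 0), (0, 1), -(0, 1)}
  have hfiber :
      ∀ d ∈ D, #{p ∈ {p ∈ C ×ˢ C | Adj p.1 p.2} | p.2 - p.1 = d} = bondsAlong C d := by
    intro d hd
    rw [filter_filter, ← card_filter_snd_eq_fst_add]
    congr 1
    refine filter_congr fun p _ => ?_
    have hsub : p.2 - p.1 = d ↔ p.2 = p.1 + d := sub_eq_iff_eq_add'
    exact ⟨fun h => hsub.1 h.2, fun h => ⟨(adj_iff_sub_mem _ _).2 (hsub.2 h ▸ hd), hsub.2 h⟩⟩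
  -- Sort the ordered adjacent pairs by displacement; opposite displacements count alike.
  have hcount :
      #{p ∈ C ×ˢ C | Adj p.1 p.2} = 2 * (bondsAlong C (1, 0) + bondsAlong C (0, 1)) := by
    rw [card_eq_sum_card_fiberwise (t := D)
        (fun p hp => (adj_iff_sub_mem _ _).1 (mem_filter.1 hp).2),
      sum_congr rfl hfiber, sum_insert (by decide), sum_insert (by decide),
      sum_insert (by decide), sum_singleton,
      bondsAlong_neg, bondsAlong_neg]
    ring
  rw [bonds, hcount, Nat.mul_div_cancel_left _ two_pos]

lemma bonds_add_card_image_fst_add_card_image_snd_le (C : Finset (ℤ × ℤ)) :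
    bonds C + #(C.image Prod.fst) + #(C.image Prod.snd) ≤ 2 * #C := by
  have hrows := bondsAlong_add_card_image_le C (1, 0) Prod.snd Prod.fst
    (fun _ => by simp) (fun _ => by simp)
  have hcols := bondsAlong_add_card_image_le C (0, 1) Prod.fst Prod.snd
    (fun _ => by simp) (fun _ => by simp)
  rw [bonds_eq_bondsAlong_add_bondsAlong]
  omega

lemma bonds_le_of_card_eq_sq {C : Finset (ℤ × ℤ)} {ℓ : ℕ} (hC : #C = ℓ ^ 2) :
    bonds C ≤ 2 * ℓ ^ 2 - 2 * ℓ := by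
  have hproj : #C ≤ #(C.image Prod.fst) * #(C.image Prod.snd) :=
    (card_le_card subset_product).trans_eq (card_product _ _)
  have hperim := two_mul_le_add_of_sq_le_mul (Nat.zero_le _) (Nat.zero_le _) (hC ▸ hproj)
  have := bonds_add_card_image_fst_add_card_image_snd_le C
  omega

lemma bondsAlong_rectangle_right (a b : ℕ) :
    bondsAlong (Ico (0 : ℤ) a ×ˢ Ico (0 : ℤ) b) (1, 0) = (a - 1) * b := by
  have hfilter : {x ∈ Ico (0 : ℤ) a ×ˢ Ico (0 : ℤ) b | x + (1, 0) ∈ Ico (0 : ℤ) a ×ˢ Ico (0 : ℤ) b}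
      = Ico (0 : ℤ) (a - 1 : ℕ) ×ˢ Ico (0 : ℤ) b := by
    ext ⟨x, y⟩
    simp only [mem_filter, mem_product, mem_Ico, Prod.mk_add_mk]
    omega
  rw [bondsAlong, hfilter, card_product, Int.card_Ico, Int.card_Ico]
  simp

lemma bondsAlong_rectangle_up (a b : ℕ) :
    bondsAlong (Ico (0 : ℤ) a ×ˢ Ico (0 : ℤ) b) (0, 1) = a * (b - 1) := by
  have hfilter : {x ∈ Ico (0 : ℤ) a ×ˢ Ico (0 : ℤ) b | x + (0, 1) ∈ Ico (0 : ℤ) a ×ˢ Ico (0 : ℤ) b}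
      = Ico (0 : ℤ) a ×ˢ Ico (0 : ℤ) (b - 1 : ℕ) := by
    ext ⟨x, y⟩
    simp only [mem_filter, mem_product, mem_Ico, Prod.mk_add_mk]
    omega
  rw [bondsAlong, hfilter, card_product, Int.card_Ico, Int.card_Ico]
  simp

lemma bonds_rectangle (a b : ℕ) :
    bonds (Ico (0 : ℤ) a ×ˢ Ico (0 : ℤ) b) = (a - 1) * b + a * (b - 1) := by
  rw [bonds_eq_bondsAlong_add_bondsAlong, bondsAlong_rectangle_right, bondsAlong_rectangle_up]

theorem stmt_14_general (ℓ : ℕ) :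
    (∀ C : Finset (ℤ × ℤ), C.card = ℓ ^ 2 → bonds C ≤ 2 * ℓ ^ 2 - 2 * ℓ) ∧
    (Finset.Ico (0 : ℤ) (ℓ : ℤ) ×ˢ Finset.Ico (0 : ℤ) (ℓ : ℤ)).card = ℓ ^ 2 ∧
    bonds (Finset.Ico (0 : ℤ) (ℓ : ℤ) ×ˢ Finset.Ico (0 : ℤ) (ℓ : ℤ))
      = 2 * ℓ ^ 2 - 2 * ℓ := by
  refine ⟨fun C hC => bonds_le_of_card_eq_sq hC, by simp [sq], ?_⟩
  rw [bonds_rectangle, mul_comm ℓ, ← two_mul, Nat.sub_one_mul, Nat.mul_sub, sq]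

/-- Among subsets of `ℤ²` with exactly `ℓ²` elements the maximal number of
bonds is `2ℓ² - 2ℓ`, attained by the `ℓ × ℓ` square. -/
theorem stmt_14 (ℓ : ℕ) (hℓ : 1 ≤ ℓ) :
    (∀ C : Finset (ℤ × ℤ), C.card = ℓ ^ 2 → bonds C ≤ 2 * ℓ ^ 2 - 2 * ℓ) ∧
    (Finset.Ico (0 : ℤ) (ℓ : ℤ) ×ˢ Finset.Ico (0 : ℤ) (ℓ : ℤ)).card = ℓ ^ 2 ∧
    bonds (Finset.Ico (0 : ℤ) (ℓ : ℤ) ×ˢ Finset.Ico (0 : ℤ) (ℓ : ℤ))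
      = 2 * ℓ ^ 2 - 2 * ℓ :=
  stmt_14_general ℓ
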